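/- Let X be a metric space such that for all y, z ∈ X and every ε > 0 there exists a continuous path from y to z of length less than dist(y, z) + ε. Let x ∈ X, let G be a group, and let φ : π₁(X, x) → G be a group homomorphism. Define sys(X, φ, x) ∈ [0, ∞] as the infimum of the lengths of all rectifiable loops based at x whose path-homotopy class has nontrivial image under φ. If r > 0 satisfies 2r < sys(X, φ, x), then no rectifiable loop based at x whose class has nontrivial image under φ has its image entirely contained in the open ball B(x, r). -/

import Mathlib

open CategoryTheory

attribute [local instance] Path.Homotopic.setoid

/-- The length of a path in a metric space: the total variation of the map on `[0,1]`. -/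
noncomputable def pathLength {X : Type*} [MetricSpace X] {y z : X} (σ : Path y z) : ENNReal :=
  eVariationOn σ.extend (Set.Icc 0 1)

/-- The element of the fundamental group `π₁(X, x)` determined by a loop based at `x`. -/
noncomputable def loopClass {X : Type*} [TopologicalSpace X] {x : X} (γ : Path x x) :
    FundamentalGroup X x :=
  FundamentalGroup.fromPath (⟦γ⟧ : Path.Homotopic.Quotient x x)

/-- The `φ`-relative systole of `X` at `x`: the infimum of lengths of rectifiable loops
based at `x` whose path-homotopy class has nontrivial image under `φ`. -/
noncomputable def relSystole {X : Type*} [MetricSpace X] (x : X) {G : Type*} [Group G]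
    (φ : FundamentalGroup X x →* G) : ENNReal :=
  ⨅ (γ : Path x x) (_ : pathLength γ ≠ ⊤ ∧ φ (loopClass γ) ≠ 1), pathLength γ

/-
Subdivide `γ` into arcs of length at most `δ`, where `2r + 3δ` is still below the systole, and
join `x` to every point `p` of the ball by a path `c p` of length `< r + δ`. For consecutive
subdivision points `p, q`, the loop `c p · (arc from p to q) · (c q)⁻¹` is shorter than the
systole, so its class lies in `ker φ`. These loops telescope to a conjugate of `γ` by the short
loop `c x`, hence `φ [γ] = 1`.
-/

namespace Path

variable {X : Type*} [TopologicalSpace X] {x a b d : X}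

-- Connectors are indexed by points rather than by subdivision times, so that both ends of a
-- subdivided loop at `x` use the same connector `c x`.
noncomputable def conjLoop (c : ∀ p : X, Path x p) (γ : Path a b) : Path x x :=
  (c a).trans (γ.trans (c b).symm)

theorem loopClass_conjLoop_refl (c : ∀ p : X, Path x p) (a : X) :
    loopClass (conjLoop c (Path.refl a)) = 1 := by
  change Homotopic.Quotient.mk _ = Homotopic.Quotient.refl x
  simp [conjLoop]

-- Multiplication in `FundamentalGroup` is composition of morphisms: `p * q` is `q`, then `p`.
theorem loopClass_conjLoop_trans (c : ∀ p : X, Path x p) (γ : Path a b) (γ' : Path b d) :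
    loopClass (conjLoop c (γ.trans γ')) =
      loopClass (conjLoop c γ') * loopClass (conjLoop c γ) := by
  change Homotopic.Quotient.mk _ =
    Homotopic.Quotient.trans (Homotopic.Quotient.mk _) (Homotopic.Quotient.mk _)
  simp only [conjLoop, Homotopic.Quotient.mk_trans, Homotopic.Quotient.mk_symm,
    Homotopic.Quotient.trans_assoc]
  rw [← Homotopic.Quotient.trans_assoc (Homotopic.Quotient.mk (c b)).symm,
    Homotopic.Quotient.symm_trans, Homotopic.Quotient.refl_trans]

theorem loopClass_conjLoop_congr (c : ∀ p : X, Path x p) {γ γ' : Path a b}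
    (h : γ.Homotopic γ') : loopClass (conjLoop c γ) = loopClass (conjLoop c γ') :=
  Quotient.sound ((Homotopic.refl _).hcomp (h.hcomp (Homotopic.refl _)))

theorem loopClass_conjLoop_cast (c : ∀ p : X, Path x p) (γ : Path x x) (ha : a = x)
    (hb : b = x) :
    loopClass (conjLoop c (γ.cast ha hb)) =
      (loopClass (c x))⁻¹ * loopClass γ * loopClass (c x) := by
  subst ha hb
  rfl

theorem loopClass_conjLoop_subpath_mem (c : ∀ p : X, Path x p) (γ : Path a b)
    (H : Subgroup (FundamentalGroup X x)) (t : ℕ → unitInterval) (n : ℕ)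
    (h : ∀ i < n, loopClass (conjLoop c (γ.subpath (t i) (t (i + 1)))) ∈ H) :
    loopClass (conjLoop c (γ.subpath (t 0) (t n))) ∈ H := by
  induction n with
  | zero => simpa [loopClass_conjLoop_refl] using H.one_mem
  | succ n ih =>
    rw [← loopClass_conjLoop_congr c ⟨Homotopy.subpathTransSubpath γ _ _ _⟩,
      loopClass_conjLoop_trans]
    exact H.mul_mem (h n n.lt_succ_self) (ih fun i hi => h i (hi.trans n.lt_succ_self))

theorem loopClass_mem_of_forall_conjLoop_subpath_mem (c : ∀ p : X, Path x p) (γ : Path x x)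
    (H : Subgroup (FundamentalGroup X x)) (hc : loopClass (c x) ∈ H) (t : ℕ → unitInterval)
    (n : ℕ) (h0 : t 0 = 0) (hn : t n = 1)
    (h : ∀ i < n, loopClass (conjLoop c (γ.subpath (t i) (t (i + 1)))) ∈ H) :
    loopClass γ ∈ H := by
  have hconj := loopClass_conjLoop_subpath_mem c γ H t n h
  rw [h0, hn, subpath_zero_one, loopClass_conjLoop_cast] at hconj
  have hγ : loopClass γ = loopClass (c x) *
      ((loopClass (c x))⁻¹ * loopClass γ * loopClass (c x)) * (loopClass (c x))⁻¹ := by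
    group
  rw [hγ]
  exact H.mul_mem (H.mul_mem hc hconj) (H.inv_mem hc)

end Path

section PathLength

open Set

variable {X : Type*} [MetricSpace X] {a b d : X}

theorem pathLength_symm (γ : Path a b) : pathLength γ.symm = pathLength γ := by
  rw [pathLength, Path.extend_symm, ← Function.comp_def,
    eVariationOn.comp_eq_of_antitoneOn _ _ fun _ _ _ _ h => by linarith]
  simp [pathLength]

theorem pathLength_trans (γ : Path a b) (γ' : Path b d) :
    pathLength (γ.trans γ') = pathLength γ + pathLength γ' := by
  have h₁ : EqOn (γ.trans γ').extend (γ.extend ∘ fun t => 2 * t) (Icc 0 (1 / 2)) :=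
    fun t ht => Path.extend_trans_of_le_half _ _ ht.2
  have h₂ : EqOn (γ.trans γ').extend (γ'.extend ∘ fun t => 2 * t - 1) (Icc (1 / 2) 1) :=
    fun t ht => Path.extend_trans_of_half_le _ _ ht.1
  have himage₁ : (fun t : ℝ => 2 * t) '' Icc 0 (1 / 2) = Icc 0 1 := by
    simp [image_mul_left_Icc]
  have himage₂ : (fun t : ℝ => 2 * t - 1) '' Icc (1 / 2) 1 = Icc 0 1 := by
    simp only [sub_eq_add_neg, image_affine_Icc' (show (0 : ℝ) < 2 by norm_num)]
    norm_num
  have hsplit := eVariationOn.Icc_add_Icc (γ.trans γ').extend (s := univ)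
    (show (0 : ℝ) ≤ 1 / 2 by norm_num) (show (1 / 2 : ℝ) ≤ 1 by norm_num) (mem_univ _)
  simp only [univ_inter] at hsplit
  rw [pathLength, ← hsplit, eVariationOn.eq_of_eqOn h₁, eVariationOn.eq_of_eqOn h₂,
    eVariationOn.comp_eq_of_monotoneOn _ _ fun _ _ _ _ h => by linarith,
    eVariationOn.comp_eq_of_monotoneOn _ _ fun _ _ _ _ h => by linarith, himage₁, himage₂]
  rfl

theorem pathLength_conjLoop {x : X} (c : ∀ p : X, Path x p) (γ : Path a b) :
    pathLength (Path.conjLoop c γ) = pathLength (c a) + (pathLength γ + pathLength (c b)) := by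
  rw [Path.conjLoop, pathLength_trans, pathLength_trans, pathLength_symm]

theorem pathLength_subpath_le (γ : Path a b) {s u : unitInterval} (hsu : s ≤ u) :
    pathLength (γ.subpath s u) ≤ eVariationOn γ.extend (Icc (s : ℝ) u) := by
  have hmem : ∀ t ∈ Icc (0 : ℝ) 1, (1 - t) * s + t * u ∈ Icc (s : ℝ) u := fun t ht => by
    have : (s : ℝ) ≤ u := hsu
    constructor <;> nlinarith [ht.1, ht.2]
  have h : EqOn (γ.subpath s u).extend (γ.extend ∘ fun t => (1 - t) * s + t * u) (Icc 0 1) :=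
    fun t ht => by
      rw [Path.extend_apply _ ht, Function.comp_apply,
        Path.extend_apply _ (Icc_subset_Icc s.2.1 u.2.2 (hmem t ht))]
      rfl
  rw [pathLength, eVariationOn.eq_of_eqOn h]
  refine eVariationOn.comp_le_of_monotoneOn _ _ (fun t _ t' _ htt' => ?_) hmem
  have : (s : ℝ) ≤ u := hsu
  nlinarith

end PathLength

section Partition

open Set

theorem LocallyBoundedVariationOn.continuousOn_variationOnFromTo {E : Type*}
    [PseudoMetricSpace E] {f : ℝ → E} {s : Set ℝ} (hf : LocallyBoundedVariationOn f s)
    (hc : ContinuousOn f s) {a : ℝ} (ha : a ∈ s) :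
    ContinuousOn (variationOnFromTo f s a) s := by
  intro b hb
  have hleft := variationOnFromTo.tendsto_left ha hb hf
    ((hc b hb).mono_left (nhdsWithin_mono _ inter_subset_left))
  have hright := variationOnFromTo.tendsto_right ha hb hf
    ((hc b hb).mono_left (nhdsWithin_mono _ inter_subset_left))
  rw [dist_self, sub_zero] at hleft
  rw [dist_self, add_zero] at hright
  rw [← continuousWithinAt_sdiff_self, sdiff_eq, ← Iio_union_Ioi, inter_union_distrib_left]
  exact ContinuousWithinAt.union (s := s ∩ Iio b) hleft hright

theorem BoundedVariationOn.exists_partition_eVariationOn_le {E : Type*} [PseudoMetricSpace E]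
    {f : ℝ → E} (hf : BoundedVariationOn f (Icc 0 1)) (hc : ContinuousOn f (Icc 0 1))
    {δ : ℝ} (hδ : 0 < δ) :
    ∃ (n : ℕ) (t : ℕ → unitInterval), t 0 = 0 ∧ t n = 1 ∧
      ∀ i < n, t i ≤ t (i + 1) ∧
        eVariationOn f (Icc (t i : ℝ) (t (i + 1))) ≤ ENNReal.ofReal δ := by
  have h0 : (0 : ℝ) ∈ Icc 0 1 := left_mem_Icc.2 zero_le_one
  obtain ⟨η, hη, hV⟩ := Metric.uniformContinuousOn_iff.1
    (isCompact_Icc.uniformContinuousOn_of_continuous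
      (hf.locallyBoundedVariationOn.continuousOn_variationOnFromTo hc h0)) δ hδ
  have hshort : ∀ a ∈ Icc (0 : ℝ) 1, ∀ b ∈ Icc (0 : ℝ) 1, a ≤ b → b - a < η →
      eVariationOn f (Icc a b) ≤ ENNReal.ofReal δ := fun a ha b hb hab hba => by
    have hsplit := variationOnFromTo.add hf.locallyBoundedVariationOn h0 ha hb
    have hclose := hV b hb a ha (by rwa [Real.dist_eq, abs_of_nonneg (by linarith)])
    rw [Real.dist_eq, ← hsplit, add_sub_cancel_left, variationOnFromTo.eq_of_le _ _ hab,
      inter_eq_right.2 (Icc_subset_Icc ha.1 hb.2), abs_of_nonneg ENNReal.toReal_nonneg] at hclose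
    rw [← ENNReal.ofReal_toReal (ne_top_of_le_ne_top hf (eVariationOn.mono f
      (Icc_subset_Icc ha.1 hb.2)))]
    exact ENNReal.ofReal_le_ofReal hclose.le
  obtain ⟨n, hn⟩ := exists_nat_one_div_lt hη
  have hpt : ∀ i ≤ n + 1, (i : ℝ) / (n + 1) ∈ Icc (0 : ℝ) 1 := fun i hi =>
    ⟨by positivity, div_le_one_of_le₀ (by exact_mod_cast hi) (by positivity)⟩
  refine ⟨n + 1, fun i => projIcc 0 1 zero_le_one (i / (n + 1)), by simp, ?_, fun i hi => ?_⟩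
  · simp [div_self (show (n : ℝ) + 1 ≠ 0 by positivity)]
  · have hle : (i : ℝ) / (n + 1) ≤ ((i + 1 : ℕ) : ℝ) / (n + 1) := by gcongr; simp
    have hgap : ((i + 1 : ℕ) : ℝ) / (n + 1) - i / (n + 1) = 1 / (n + 1) := by push_cast; ring
    refine ⟨monotone_projIcc _ hle, ?_⟩
    dsimp only
    rw [projIcc_of_mem _ (hpt i hi.le), projIcc_of_mem _ (hpt (i + 1) hi)]
    exact hshort _ (hpt i hi.le) _ (hpt (i + 1) hi) hle (hgap ▸ hn)

end Partition

theorem exists_pos_ofReal_add_lt {a : ℝ} {b : ENNReal} (h : ENNReal.ofReal a < b) :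
    ∃ ε > 0, ENNReal.ofReal (a + ε) < b := by
  have hlim := (ENNReal.continuous_ofReal.comp (continuous_const_add a)).tendsto' 0 _
    (by rw [Function.comp_apply, add_zero])
  obtain ⟨ε, hεb, hε⟩ :=
    (((hlim.eventually (gt_mem_nhds h)).filter_mono nhdsWithin_le_nhds).and
      (self_mem_nhdsWithin (s := Set.Ioi 0))).exists
  exact ⟨ε, hε, hεb⟩

section Systole

variable {X : Type*} [MetricSpace X] {x : X} {G : Type*} [Group G]
  {φ : FundamentalGroup X x →* G}

theorem relSystole_le_pathLength {γ : Path x x} (hγ : pathLength γ ≠ ⊤)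
    (hφ : φ (loopClass γ) ≠ 1) : relSystole x φ ≤ pathLength γ :=
  iInf₂_le γ ⟨hγ, hφ⟩

theorem map_loopClass_eq_one_of_pathLength_lt {γ : Path x x}
    (h : pathLength γ < relSystole x φ) : φ (loopClass γ) = 1 := by
  by_contra hne
  exact (relSystole_le_pathLength h.ne_top hne).not_gt h

end Systole

theorem systolic_loop_not_in_small_ball_general {X : Type*} [MetricSpace X]
    (hconn : ∀ y z : X, ∀ ε : ℝ, 0 < ε →
      ∃ σ : Path y z, pathLength σ < ENNReal.ofReal (dist y z + ε))
    (x : X) {G : Type*} [Group G] (φ : FundamentalGroup X x →* G)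
    (r : ℝ) (hsys : ENNReal.ofReal (2 * r) < relSystole x φ)
    (γ : Path x x) (hrect : pathLength γ ≠ ⊤) (hγ : φ (loopClass γ) ≠ 1) :
    ¬ Set.range ⇑γ ⊆ Metric.ball x r := by
  intro hball
  have hr : 0 < r := Metric.pos_of_mem_ball (hball (⟨0, γ.source⟩ : x ∈ Set.range γ))
  obtain ⟨ε, hε, hεsys⟩ := exists_pos_ofReal_add_lt hsys
  have hε3 : 0 < ε / 3 := by positivity
  choose c hc using fun p => hconn x p (ε / 3) hε3
  have hc_ball : ∀ p ∈ Metric.ball x r, pathLength (c p) ≤ ENNReal.ofReal (r + ε / 3) :=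
    fun p hp => (hc p).le.trans (ENNReal.ofReal_le_ofReal (by linarith [Metric.mem_ball'.1 hp]))
  obtain ⟨n, t, ht0, htn, ht⟩ := BoundedVariationOn.exists_partition_eVariationOn_le hrect
    γ.continuous_extend.continuousOn hε3
  have hseg : ∀ i < n, loopClass (Path.conjLoop c (γ.subpath (t i) (t (i + 1)))) ∈ φ.ker :=
    fun i hi => by
      refine map_loopClass_eq_one_of_pathLength_lt (hεsys.trans_le' ?_)
      calc _ ≤ ENNReal.ofReal (r + ε / 3) +
              (ENNReal.ofReal (ε / 3) + ENNReal.ofReal (r + ε / 3)) := by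
            rw [pathLength_conjLoop]
            gcongr
            · exact hc_ball _ (hball ⟨_, rfl⟩)
            · exact (pathLength_subpath_le γ (ht i hi).1).trans (ht i hi).2
            · exact hc_ball _ (hball ⟨_, rfl⟩)
        _ = ENNReal.ofReal (2 * r + ε) := by
            rw [← ENNReal.ofReal_add (by positivity) (by positivity),
              ← ENNReal.ofReal_add (by positivity) (by positivity)]
            ring_nf
  have hbase : loopClass (c x) ∈ φ.ker := map_loopClass_eq_one_of_pathLength_lt <|
    hεsys.trans_le' <| (hc_ball x (Metric.mem_ball_self hr)).trans
      (ENNReal.ofReal_le_ofReal (by linarith))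
  exact hγ (Path.loopClass_mem_of_forall_conjLoop_subpath_mem c γ φ.ker hbase t n ht0 htn hseg)

/-- If `2r` is less than the `φ`-relative systole of `X` at `x`, then no rectifiable loop
based at `x` whose path-homotopy class has nontrivial image under `φ` has its image
entirely contained in the open ball `B(x, r)`.  (`X` is assumed to be such that any two
points can be joined by paths of length arbitrarily close to their distance.) -/
theorem systolic_loop_not_in_small_ball {X : Type*} [MetricSpace X]
    (hconn : ∀ y z : X, ∀ ε : ℝ, 0 < ε →
      ∃ σ : Path y z, pathLength σ < ENNReal.ofReal (dist y z + ε))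
    (x : X) {G : Type*} [Group G] (φ : FundamentalGroup X x →* G)
    (r : ℝ) (hr : 0 < r) (hsys : ENNReal.ofReal (2 * r) < relSystole x φ)
    (γ : Path x x) (hrect : pathLength γ ≠ ⊤) (hγ : φ (loopClass γ) ≠ 1) :
    ¬ Set.range ⇑γ ⊆ Metric.ball x r :=
  systolic_loop_not_in_small_ball_general hconn x φ r hsys γ hrect hγ
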